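/- arXiv:1809.02192 — 2 statements merged into one kernel-verified Lean document; each statement's English description precedes it below -/
import Mathlib

section
/- The divergence operator maps the space x·P_k(ℝ²) = {x p(x) : p ∈ P_k(ℝ²)} linearly, injectively, and onto P_k(ℝ²), for any k ≥ 0. -/
/-!
On a monomial, `div (x · x^α) = (|α| + n) x^α` in `n` variables. So `p ↦ div (x p)` is diagonal
in the monomial basis with nonzero eigenvalues: it is bijective and preserves supports, hence
total degrees.
-/

open MvPolynomial

namespace MvPolynomial

variable {σ R : Type*} [Fintype σ]

noncomputable def radialDiv [CommSemiring R] (p : MvPolynomial σ R) : MvPolynomial σ R :=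
  ∑ i, pderiv i (X i * p)

theorem radialDiv_fin_two [CommSemiring R] (p : MvPolynomial (Fin 2) R) :
    radialDiv p = pderiv 0 (X 0 * p) + pderiv 1 (X 1 * p) :=
  Fin.sum_univ_two (fun i => pderiv i (X i * p))

theorem coeff_radialDiv [CommSemiring R] (p : MvPolynomial σ R) (m : σ →₀ ℕ) :
    coeff m (radialDiv p) = ((m.degree + Fintype.card σ : ℕ) : R) * coeff m p := by
  simp only [radialDiv, coeff_sum, coeff_pderiv, add_comm m, coeff_X_mul,
    Finsupp.degree_eq_sum, mul_comm (coeff m p)]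
  push_cast
  rw [← Finset.sum_mul, Finset.sum_add_distrib, Finset.sum_const, Finset.card_univ, nsmul_one]

variable [Nonempty σ]

theorem degree_add_card_ne_zero [AddMonoidWithOne R] [CharZero R] (m : σ →₀ ℕ) :
    ((m.degree + Fintype.card σ : ℕ) : R) ≠ 0 :=
  Nat.cast_ne_zero.2 (Nat.add_pos_right _ Fintype.card_pos).ne'

theorem support_radialDiv [CommSemiring R] [NoZeroDivisors R] [CharZero R]
    (p : MvPolynomial σ R) : (radialDiv p).support = p.support := by
  ext m
  simp only [mem_support_iff, coeff_radialDiv, ne_eq, mul_eq_zero, degree_add_card_ne_zero,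
    false_or]

theorem totalDegree_radialDiv [CommSemiring R] [NoZeroDivisors R] [CharZero R]
    (p : MvPolynomial σ R) : (radialDiv p).totalDegree = p.totalDegree := by
  rw [totalDegree, support_radialDiv, totalDegree]

theorem radialDiv_injective [CommRing R] [IsDomain R] [CharZero R] :
    Function.Injective (radialDiv : MvPolynomial σ R → MvPolynomial σ R) := by
  intro p p' h
  ext m
  have h_coeff := congrArg (coeff m) h
  rw [coeff_radialDiv, coeff_radialDiv] at h_coeff
  exact mul_left_cancel₀ (degree_add_card_ne_zero m) h_coeff

theorem radialDiv_surjective [Field R] [CharZero R] :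
    Function.Surjective (radialDiv : MvPolynomial σ R → MvPolynomial σ R) := by
  classical
  intro q
  refine ⟨∑ m ∈ q.support, monomial m (coeff m q / (m.degree + Fintype.card σ : ℕ)), ?_⟩
  ext m
  rw [coeff_radialDiv, coeff_sum]
  simp only [coeff_monomial, Finset.sum_ite_eq', mem_support_iff]
  split_ifs with h
  · exact mul_div_cancel₀ _ (degree_add_card_ne_zero m)
  · rw [mul_zero, not_not.1 h]

end MvPolynomial

/-- The divergence operator maps `x·P_k(ℝ²)` linearly, injectively, and onto `P_k(ℝ²)`:
for every `q` of total degree at most `k` there is a unique `p` of total degree at most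
`k` with `div (x p) = q`. -/
theorem stmt_4 (k : ℕ) :
    ∀ q : MvPolynomial (Fin 2) ℝ, q.totalDegree ≤ k →
      ∃! p : MvPolynomial (Fin 2) ℝ, p.totalDegree ≤ k ∧
        pderiv 0 (X 0 * p) + pderiv 1 (X 1 * p) = q := by
  intro q hq
  simp only [← radialDiv_fin_two]
  obtain ⟨p, rfl⟩ := radialDiv_surjective q
  rw [totalDegree_radialDiv] at hq
  exact ⟨p, ⟨hq, rfl⟩, fun p' ⟨_, h⟩ => radialDiv_injective h⟩
end

section
/- The kernel of the divergence operator on vector polynomials P_r²(ℝ²) is exactly curl P_{r+1}(ℝ²), where curl φ = (∂φ/∂x₂, −∂φ/∂x₁). -/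
/-!
The commutator of two partial derivatives is a derivation that kills every variable, so partial
derivatives commute and `curl φ` is divergence free. Conversely, for `∂ᵢv₁ + ∂ⱼv₂ = 0` take the
antiderivative `ψ` of `v₁` in `xⱼ`; then `-v₂ - ∂ᵢψ` has vanishing `xⱼ`-derivative, so adding its
antiderivative in `xᵢ` to `ψ` yields a stream function `φ`. Antidifferentiation raises the total
degree by one and differentiation lowers it by one, which gives `deg φ ≤ r + 1`.
-/

open MvPolynomial

namespace MvPolynomial

section CommRing

variable {R σ : Type*} [CommRing R]

theorem pderiv_pderiv_comm (i j : σ) (p : MvPolynomial σ R) :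
    pderiv i (pderiv j p) = pderiv j (pderiv i p) := by
  classical
  have hcomm : ⁅pderiv (R := R) i, pderiv (R := R) j⁆ = 0 :=
    derivation_ext fun k => by
      rw [Derivation.commutator_apply, pderiv_X, pderiv_X, Pi.single_apply, Pi.single_apply]
      split_ifs <;> simp
  simpa [Derivation.commutator_apply, sub_eq_zero] using congr($hcomm p)

theorem totalDegree_apply_le_of_forall_monomial {f : MvPolynomial σ R →ₗ[R] MvPolynomial σ R}
    {m n : ℕ} (hf : ∀ s : σ →₀ ℕ, s.degree ≤ m → (f (monomial s 1)).totalDegree ≤ n)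
    {p : MvPolynomial σ R} (hp : p.totalDegree ≤ m) : (f p).totalDegree ≤ n := by
  have : restrictTotalDegree σ R m ≤ (restrictTotalDegree σ R n).comap f := by
    rw [restrictTotalDegree, restrictSupport_eq_span, Submodule.span_le]
    rintro _ ⟨s, hs, rfl⟩
    exact (mem_restrictTotalDegree σ n _).2 (hf s hs)
  exact (mem_restrictTotalDegree σ n _).1 (this ((mem_restrictTotalDegree σ m p).2 hp))

theorem totalDegree_pderiv_le {i : σ} {p : MvPolynomial σ R} {n : ℕ}
    (hp : p.totalDegree ≤ n + 1) : (pderiv i p).totalDegree ≤ n := by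
  classical
  refine totalDegree_apply_le_of_forall_monomial (f := (pderiv i).toLinearMap) (fun s hs => ?_) hp
  change (pderiv i (monomial s 1)).totalDegree ≤ n
  rw [pderiv_monomial]
  rcases Nat.eq_zero_or_pos (s i) with h0 | h0
  · simp [h0]
  · have hs' : s = s - Finsupp.single i 1 + Finsupp.single i 1 :=
      (tsub_add_cancel_of_le (Finsupp.single_le_iff.2 h0)).symm
    refine (totalDegree_monomial_le _ _).trans ?_
    change (s - Finsupp.single i 1).degree ≤ n
    rw [hs', map_add, Finsupp.degree_single] at hs
    omega

end CommRing

section Antideriv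

variable {K σ : Type*} [Field K]

noncomputable def antideriv (i : σ) : MvPolynomial σ K →ₗ[K] MvPolynomial σ K :=
  (basisMonomials σ K).constr K fun s => monomial (s + Finsupp.single i 1) ((s i + 1 : K)⁻¹)

theorem antideriv_monomial (i : σ) (s : σ →₀ ℕ) (c : K) :
    antideriv i (monomial s c) = monomial (s + Finsupp.single i 1) (c / (s i + 1)) := by
  calc antideriv i (monomial s c) = c • antideriv i (basisMonomials σ K s) := by
        rw [coe_basisMonomials, ← map_smul, smul_monomial, smul_eq_mul, mul_one]
    _ = monomial (s + Finsupp.single i 1) (c / (s i + 1)) := by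
        rw [antideriv, Module.Basis.constr_basis, smul_monomial, smul_eq_mul, div_eq_mul_inv]

theorem pderiv_antideriv [CharZero K] (i : σ) (p : MvPolynomial σ K) :
    pderiv i (antideriv i p) = p := by
  induction p using MvPolynomial.induction_on' with
  | monomial s c =>
    rw [antideriv_monomial, pderiv_monomial, add_tsub_cancel_right]
    simp [div_mul_cancel₀ c (Nat.cast_add_one_ne_zero (s i))]
  | add p q hp hq => rw [map_add, map_add, hp, hq]

theorem pderiv_antideriv_of_ne {i j : σ} (hij : i ≠ j) (p : MvPolynomial σ K) :
    pderiv j (antideriv i p) = antideriv i (pderiv j p) := by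
  induction p using MvPolynomial.induction_on' with
  | monomial s c =>
    have hexp : s + Finsupp.single i 1 - Finsupp.single j 1
        = s - Finsupp.single j 1 + Finsupp.single i 1 := by
      classical
      ext k
      simp only [Finsupp.add_apply, Finsupp.tsub_apply, Finsupp.single_apply]
      split_ifs <;> grind
    rw [antideriv_monomial, pderiv_monomial, pderiv_monomial, antideriv_monomial, hexp]
    simp [hij, hij.symm, div_mul_eq_mul_div]
  | add p q hp hq => rw [map_add, map_add, map_add, map_add, hp, hq]

theorem totalDegree_antideriv_le {i : σ} {p : MvPolynomial σ K} {n : ℕ}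
    (hp : p.totalDegree ≤ n) : (antideriv i p).totalDegree ≤ n + 1 := by
  refine totalDegree_apply_le_of_forall_monomial (fun s hs => ?_) hp
  rw [antideriv_monomial]
  refine (totalDegree_monomial_le _ _).trans ?_
  change (s + Finsupp.single i 1).degree ≤ n + 1
  rw [map_add, Finsupp.degree_single]
  omega

theorem exists_pderiv_eq_of_pderiv_add_pderiv_eq_zero [CharZero K] {i j : σ} (hij : i ≠ j)
    {v₁ v₂ : MvPolynomial σ K} {r : ℕ} (h₁ : v₁.totalDegree ≤ r) (h₂ : v₂.totalDegree ≤ r)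
    (hdiv : pderiv i v₁ + pderiv j v₂ = 0) :
    ∃ φ : MvPolynomial σ K, φ.totalDegree ≤ r + 1 ∧ v₁ = pderiv j φ ∧ v₂ = -pderiv i φ := by
  set ψ := antideriv j v₁
  have hψ : pderiv j ψ = v₁ := pderiv_antideriv j v₁
  set g := -v₂ - pderiv i ψ with hg_def
  have hg : pderiv j g = 0 := by
    rw [hg_def, map_sub, map_neg, pderiv_pderiv_comm, hψ]
    linear_combination -hdiv
  refine ⟨ψ + antideriv i g, ?_, ?_, ?_⟩
  · have hψr : ψ.totalDegree ≤ r + 1 := totalDegree_antideriv_le h₁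
    have hgr : g.totalDegree ≤ r := (totalDegree_sub _ _).trans
      (max_le ((totalDegree_neg v₂).trans_le h₂) (totalDegree_pderiv_le hψr))
    exact (totalDegree_add _ _).trans (max_le hψr (totalDegree_antideriv_le hgr))
  · rw [map_add, hψ, pderiv_antideriv_of_ne hij, hg, map_zero, add_zero]
  · rw [map_add, pderiv_antideriv, hg_def]
    ring

end Antideriv

end MvPolynomial

/-- The kernel of the divergence operator on vector polynomials `P_r²(ℝ²)` is exactly
`curl P_{r+1}(ℝ²)`, where `curl φ = (∂φ/∂x₂, −∂φ/∂x₁)`. -/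
theorem stmt_5 (r : ℕ) :
    ∀ v₁ v₂ : MvPolynomial (Fin 2) ℝ, v₁.totalDegree ≤ r → v₂.totalDegree ≤ r →
      (pderiv 0 v₁ + pderiv 1 v₂ = 0 ↔
        ∃ φ : MvPolynomial (Fin 2) ℝ, φ.totalDegree ≤ r + 1 ∧
          v₁ = pderiv 1 φ ∧ v₂ = -pderiv 0 φ) := by
  intro v₁ v₂ h₁ h₂
  refine ⟨exists_pderiv_eq_of_pderiv_add_pderiv_eq_zero (by decide) h₁ h₂, ?_⟩
  rintro ⟨φ, -, rfl, rfl⟩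
  rw [map_neg, pderiv_pderiv_comm, add_neg_cancel]
end
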